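/- If f' : [0,1] → ℝ is absolutely continuous with f'' ∈ L²(0,1), then |Q(f) - P(f)| ≤ √(47/23040 - √2/768) · σ(f''), where σ(f'') = (∫₀¹ f''(t)² dt - (f'(1) - f'(0))²)^{1/2}, Q(f) = ∫₀¹ f - (√2/8)f(0) - (1-√2/4)f(1/2) - (√2/8)f(1), and P(f) = ((4 - 3√2)/96)(f'(1) - f'(0)). The constant √(47/23040 - √2/768) is sharp. -/

import Mathlib

open MeasureTheory Real Set ProbabilityTheory

/-!
Integrating by parts twice on each half of `[0, 1]` (Peano's kernel theorem) gives
`Q(f) = ∫₀¹ K f''` for the kernel `K t = k (min t (1 - t))`, `k t = t²/2 - (√2/8) t`, and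
`P(f) = (∫₀¹ K) (∫₀¹ f'')`. So `Q(f) - P(f)` is the covariance of `K` and `f''` for the uniform
measure on `[0, 1]`, and `σ(f'')²` is the variance of `f''`. The Cauchy–Schwarz inequality for
covariances bounds the error by `√(Var K) σ(f'')` with `Var K = 47/23040 - √2/768`, and `f'' = K`
is an extremal.
-/

def IsPrimitiveOn (F φ : ℝ → ℝ) (a b : ℝ) : Prop :=
  ∀ t ∈ Icc a b, F t = F a + ∫ s in a..t, φ s

theorem isPrimitiveOn_intervalIntegral (φ : ℝ → ℝ) (a b : ℝ) :
    IsPrimitiveOn (fun t => ∫ s in a..t, φ s) φ a b := fun _ _ => by simp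

namespace IsPrimitiveOn

variable {F φ : ℝ → ℝ} {a b : ℝ}

theorem sub_eq (hF : IsPrimitiveOn F φ a b) (hab : a ≤ b) : F b - F a = ∫ s in a..b, φ s := by
  rw [hF b ⟨hab, le_rfl⟩]
  ring

theorem mono (hF : IsPrimitiveOn F φ a b) (hφ : IntervalIntegrable φ volume a b) {c d : ℝ}
    (hac : a ≤ c) (hdb : d ≤ b) : IsPrimitiveOn F φ c d := by
  intro t ht
  have hsub : ∀ x ∈ Icc c d, IntervalIntegrable φ volume a x := fun x hx =>
    hφ.mono_set (uIcc_subset_uIcc left_mem_uIcc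
      (Icc_subset_uIcc ⟨hac.trans hx.1, hx.2.trans hdb⟩))
  have hc : c ∈ Icc c d := ⟨le_rfl, ht.1.trans ht.2⟩
  rw [hF t ⟨hac.trans ht.1, ht.2.trans hdb⟩, hF c ⟨hac, hc.2.trans hdb⟩,
    ← intervalIntegral.integral_interval_sub_left (hsub t ht) (hsub c hc)]
  ring

theorem continuousOn (hF : IsPrimitiveOn F φ a b) (hφ : IntervalIntegrable φ volume a b) :
    ContinuousOn F (Icc a b) :=
  (continuousOn_const.add ((intervalIntegral.continuousOn_primitive_interval' hφ
    left_mem_uIcc).mono Icc_subset_uIcc)).congr hF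

theorem intervalIntegrable (hF : IsPrimitiveOn F φ a b) (hφ : IntervalIntegrable φ volume a b)
    (hab : a ≤ b) : IntervalIntegrable F volume a b :=
  (hF.continuousOn hφ).intervalIntegrable_of_Icc hab

theorem integral_mul_eq (hF : IsPrimitiveOn F φ a b) (hφ : IntervalIntegrable φ volume a b)
    (hab : a ≤ b) {w w' : ℝ → ℝ} (hw : ∀ x, HasDerivAt w (w' x) x) (hw' : Continuous w') :
    ∫ x in a..b, w x * φ x = w b * F b - w a * F a - ∫ x in a..b, w' x * F x := by
  set G : ℝ → ℝ := fun x => ∫ s in a..x, φ s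
  have hderiv_w : deriv w = w' := funext fun x => (hw x).deriv
  have hw_ac : AbsolutelyContinuousOnInterval w a b :=
    (contDiff_one_iff_deriv.2 ⟨fun x => (hw x).differentiableAt, hderiv_w ▸ hw'⟩).contDiffOn
      |>.absolutelyContinuousOnInterval
  have hG_ac : AbsolutelyContinuousOnInterval G a b :=
    hφ.absolutelyContinuousOnInterval_intervalIntegral left_mem_uIcc
  have hderiv_G : ∫ x in a..b, w x * deriv G x = ∫ x in a..b, w x * φ x := by
    refine intervalIntegral.integral_congr_ae ?_
    filter_upwards [hφ.ae_hasDerivAt_integral] with x hx hxab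
    rw [(hx (uIoc_subset_uIcc hxab) a left_mem_uIcc).deriv]
  have hFG : ∫ x in a..b, w' x * F x = F a * (w b - w a) + ∫ x in a..b, w' x * G x := by
    rw [← intervalIntegral.integral_eq_sub_of_hasDerivAt (fun x _ => hw x)
        (hw'.intervalIntegrable a b), ← intervalIntegral.integral_const_mul,
      ← intervalIntegral.integral_add ((hw'.intervalIntegrable a b).const_mul _)
        (ContinuousOn.intervalIntegrable (u := fun x => w' x * G x)
          (hw'.continuousOn.mul hG_ac.continuousOn))]
    refine intervalIntegral.integral_congr fun x hx => ?_
    rw [uIcc_of_le hab] at hx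
    simp only [hF x hx, G]
    ring
  have hibp := hw_ac.integral_mul_deriv_eq_deriv_mul hG_ac
  rw [hderiv_G, hderiv_w] at hibp
  rw [hibp, hFG, hF b ⟨hab, le_rfl⟩]
  simp only [G, intervalIntegral.integral_same]
  ring

theorem integral_mul_eq_twice {f f' : ℝ → ℝ} (hf : IsPrimitiveOn f f' a b)
    (hf' : IsPrimitiveOn f' φ a b) (hφ : IntervalIntegrable φ volume a b) (hab : a ≤ b)
    {w w' w'' : ℝ → ℝ} (hw : ∀ x, HasDerivAt w (w' x) x)
    (hw' : ∀ x, HasDerivAt w' (w'' x) x)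
    (hw'' : Continuous w'') :
    ∫ x in a..b, w x * φ x =
      w b * f' b - w a * f' a - (w' b * f b - w' a * f a) + ∫ x in a..b, w'' x * f x := by
  rw [hf'.integral_mul_eq hφ hab hw (continuous_iff_continuousAt.2 fun x => (hw' x).continuousAt),
    hf.integral_mul_eq (hf'.intervalIntegrable hφ hab) hab hw' hw'']
  ring

end IsPrimitiveOn

section Covariance

variable {Ω : Type*} [MeasurableSpace Ω] {μ : Measure Ω} {X Y : Ω → ℝ}

theorem sq_covariance_le [IsFiniteMeasure μ] (hX : MemLp X 2 μ) (hY : MemLp Y 2 μ) :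
    cov[X, Y; μ] ^ 2 ≤ Var[X; μ] * Var[Y; μ] := by
  have hquad : ∀ s : ℝ, 0 ≤ Var[X; μ] * (s * s) + (2 * cov[X, Y; μ]) * s + Var[Y; μ] := by
    intro s
    have h := variance_add (hX.const_smul s) hY
    rw [variance_smul, covariance_smul_left] at h
    linarith [variance_nonneg (s • X + Y) μ]
  have := discrim_le_zero hquad
  rw [discrim] at this
  nlinarith

theorem abs_covariance_le [IsFiniteMeasure μ] (hX : MemLp X 2 μ) (hY : MemLp Y 2 μ) :
    |cov[X, Y; μ]| ≤ √(Var[X; μ]) * √(Var[Y; μ]) := by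
  rw [← sqrt_mul (variance_nonneg X μ)]
  exact abs_le_sqrt (sq_covariance_le hX hY)

end Covariance

theorem abs_intervalIntegral_mul_sub_le {K g : ℝ → ℝ} (hK : IntervalIntegrable K volume 0 1)
    (hK2 : IntervalIntegrable (fun t => K t ^ 2) volume 0 1)
    (hg : IntervalIntegrable g volume 0 1)
    (hg2 : IntervalIntegrable (fun t => g t ^ 2) volume 0 1) :
    |(∫ t in (0:ℝ)..1, K t * g t) - (∫ t in (0:ℝ)..1, K t) * ∫ t in (0:ℝ)..1, g t| ≤
      √((∫ t in (0:ℝ)..1, K t ^ 2) - (∫ t in (0:ℝ)..1, K t) ^ 2) *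
        √((∫ t in (0:ℝ)..1, g t ^ 2) - (∫ t in (0:ℝ)..1, g t) ^ 2) := by
  have : IsProbabilityMeasure (volume.restrict (Ioc (0:ℝ) 1)) := ⟨by simp⟩
  have hmemLp {φ : ℝ → ℝ} (hφ : IntervalIntegrable φ volume 0 1)
      (hφ2 : IntervalIntegrable (fun t => φ t ^ 2) volume 0 1) :
      MemLp φ 2 (volume.restrict (Ioc 0 1)) :=
    (memLp_two_iff_integrable_sq hφ.1.aestronglyMeasurable).2 hφ2.1
  have h := abs_covariance_le (hmemLp hK hK2) (hmemLp hg hg2)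
  rw [covariance_eq_sub (hmemLp hK hK2) (hmemLp hg hg2), variance_eq_sub (hmemLp hK hK2),
    variance_eq_sub (hmemLp hg hg2)] at h
  simpa only [Pi.mul_apply, Pi.pow_apply, intervalIntegral.integral_of_le zero_le_one] using h

noncomputable def peanoKernelLeft (t : ℝ) : ℝ := t ^ 2 / 2 - √2 / 8 * t

theorem continuous_peanoKernelLeft : Continuous peanoKernelLeft := by
  unfold peanoKernelLeft
  fun_prop

noncomputable def peanoKernel (t : ℝ) : ℝ := peanoKernelLeft (min t (1 - t))

theorem hasDerivAt_peanoKernelLeft (x : ℝ) : HasDerivAt peanoKernelLeft (x - √2 / 8) x :=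
  (((hasDerivAt_pow 2 x).div_const 2).fun_sub ((hasDerivAt_id x).const_mul (√2 / 8))).congr_deriv
    (by push_cast; ring)

theorem continuous_peanoKernel : Continuous peanoKernel := by
  unfold peanoKernel peanoKernelLeft
  fun_prop

theorem integral_comp_peanoKernel_mul {φ g : ℝ → ℝ} (hφ : Continuous φ)
    (hg : IntervalIntegrable g volume 0 1) :
    ∫ t in (0:ℝ)..1, φ (peanoKernel t) * g t =
      (∫ t in (0:ℝ)..1/2, φ (peanoKernelLeft t) * g t) +
        ∫ t in (1/2:ℝ)..1, φ (peanoKernelLeft (1 - t)) * g t := by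
  have hint {c d : ℝ} (hc : c ∈ Icc (0:ℝ) 1) (hd : d ∈ Icc (0:ℝ) 1) :
      IntervalIntegrable (fun t => φ (peanoKernel t) * g t) volume c d :=
    (hg.mono_set (uIcc_subset_uIcc (Icc_subset_uIcc hc) (Icc_subset_uIcc hd))).continuousOn_mul
      (hφ.comp continuous_peanoKernel).continuousOn
  rw [← intervalIntegral.integral_add_adjacent_intervals (b := 1/2)
    (hint (by norm_num) (by norm_num)) (hint (by norm_num) (by norm_num))]
  congr 1 <;> refine intervalIntegral.integral_congr fun t ht => ?_ <;>
    rw [uIcc_of_le (by norm_num)] at ht <;> simp only [peanoKernel]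
  · rw [min_eq_left (by linarith [ht.2])]
  · rw [min_eq_right (by linarith [ht.1])]

theorem integral_comp_peanoKernel {φ : ℝ → ℝ} (hφ : Continuous φ) :
    ∫ t in (0:ℝ)..1, φ (peanoKernel t) =
      2 * ∫ t in (0:ℝ)..1/2, φ (peanoKernelLeft t) := by
  have h := integral_comp_peanoKernel_mul hφ (g := fun _ => 1) intervalIntegrable_const
  simp only [mul_one] at h
  rw [h, intervalIntegral.integral_comp_sub_left (fun t => φ (peanoKernelLeft t))]
  norm_num
  ring

theorem integral_peanoKernelLeft :
    ∫ t in (0:ℝ)..1/2, peanoKernelLeft t = 1/48 - √2/64 := by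
  have hF (x : ℝ) : HasDerivAt (fun t => t ^ 3 / 6 - √2 / 16 * t ^ 2) (peanoKernelLeft x) x :=
    (((hasDerivAt_pow 3 x).div_const 6).fun_sub ((hasDerivAt_pow 2 x).const_mul (√2 / 16)))
      |>.congr_deriv (by unfold peanoKernelLeft; push_cast; ring)
  rw [intervalIntegral.integral_eq_sub_of_hasDerivAt (fun x _ => hF x)
    (continuous_peanoKernelLeft.intervalIntegrable _ _)]
  ring

theorem integral_peanoKernelLeft_sq :
    ∫ t in (0:ℝ)..1/2, peanoKernelLeft t ^ 2 = 11/3840 - √2/512 := by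
  have hF (x : ℝ) : HasDerivAt (fun t => t ^ 5 / 20 - √2 / 32 * t ^ 4 + t ^ 3 / 96)
      (peanoKernelLeft x ^ 2) x :=
    ((((hasDerivAt_pow 5 x).div_const 20).fun_sub
      ((hasDerivAt_pow 4 x).const_mul (√2 / 32))).fun_add
        ((hasDerivAt_pow 3 x).div_const 96)).congr_deriv
      (by unfold peanoKernelLeft; push_cast; ring_nf; rw [sq_sqrt zero_le_two]; ring)
  rw [intervalIntegral.integral_eq_sub_of_hasDerivAt (fun x _ => hF x)
    ((continuous_peanoKernelLeft.pow 2).intervalIntegrable _ _)]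
  ring

theorem integral_peanoKernel : ∫ t in (0:ℝ)..1, peanoKernel t = (4 - 3 * √2) / 96 := by
  have h := integral_comp_peanoKernel (φ := fun x => x) continuous_id
  rw [h, integral_peanoKernelLeft]
  ring

theorem integral_peanoKernel_sq_sub_sq :
    (∫ t in (0:ℝ)..1, peanoKernel t ^ 2) - (∫ t in (0:ℝ)..1, peanoKernel t) ^ 2 =
      47/23040 - √2/768 := by
  rw [integral_comp_peanoKernel (continuous_pow 2), integral_peanoKernelLeft_sq,
    integral_peanoKernel]
  ring_nf
  rw [sq_sqrt zero_le_two]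
  ring

theorem sqrt_two_div_768_lt : √2 / 768 < 47 / 23040 := by
  nlinarith [sq_sqrt (zero_le_two : (0:ℝ) ≤ 2), sqrt_nonneg 2]

theorem quadrature_remainder_eq_integral_peanoKernel_mul {f f' f'' : ℝ → ℝ}
    (hf : IsPrimitiveOn f f' 0 1) (hf' : IsPrimitiveOn f' f'' 0 1)
    (hf'' : IntervalIntegrable f'' volume 0 1) :
    (∫ t in (0:ℝ)..1, f t) - √2 / 8 * f 0 - (1 - √2 / 4) * f (1/2) - √2 / 8 * f 1 =
      ∫ t in (0:ℝ)..1, peanoKernel t * f'' t := by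
  have hf'_int := hf'.intervalIntegrable hf'' zero_le_one
  have hf_int := hf.intervalIntegrable hf'_int zero_le_one
  have hsub {c d : ℝ} (hc : 0 ≤ c) (hd : d ≤ 1) (hcd : c ≤ d) {φ : ℝ → ℝ}
      (hφ : IntervalIntegrable φ volume 0 1) : IntervalIntegrable φ volume c d :=
    hφ.mono_set (uIcc_subset_uIcc (Icc_subset_uIcc ⟨hc, hcd.trans hd⟩)
      (Icc_subset_uIcc ⟨hc.trans hcd, hd⟩))
  have hleft := IsPrimitiveOn.integral_mul_eq_twice (a := 0) (b := 1/2)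
    (hf.mono hf'_int le_rfl (by norm_num))
    (hf'.mono hf'' le_rfl (by norm_num)) (hsub le_rfl (by norm_num) (by norm_num) hf'')
    (by norm_num) hasDerivAt_peanoKernelLeft (fun x => (hasDerivAt_id x).sub_const (√2 / 8))
    continuous_const
  have hright := IsPrimitiveOn.integral_mul_eq_twice (a := 1/2) (b := 1)
    (w := fun x => peanoKernelLeft (1 - x))
    (hf.mono hf'_int (by norm_num) le_rfl) (hf'.mono hf'' (by norm_num) le_rfl)
    (hsub (by norm_num) le_rfl (by norm_num) hf'') (by norm_num)
    (fun x => ((hasDerivAt_peanoKernelLeft (1 - x)).comp x ((hasDerivAt_id x).const_sub 1))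
      |>.congr_deriv (show _ = x - 1 + √2 / 8 by ring))
    (fun x => ((hasDerivAt_id x).sub_const 1).add_const (√2 / 8))
    continuous_const
  have hsplit := integral_comp_peanoKernel_mul continuous_id hf''
  simp only [id, one_mul] at hsplit hleft hright
  rw [hsplit, hleft, hright, ← intervalIntegral.integral_add_adjacent_intervals (b := 1/2)
    (hsub le_rfl (by norm_num) (by norm_num) hf_int)
    (hsub (by norm_num) le_rfl (by norm_num) hf_int)]
  simp only [peanoKernelLeft]
  ring

theorem stmt_17 :
    (∀ f f' f'' : ℝ → ℝ,
      (∀ t ∈ Icc (0:ℝ) 1, f t = f 0 + ∫ s in (0:ℝ)..t, f' s) →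
      (∀ t ∈ Icc (0:ℝ) 1, f' t = f' 0 + ∫ s in (0:ℝ)..t, f'' s) →
      IntervalIntegrable f'' volume 0 1 →
      IntervalIntegrable (fun t => (f'' t)^2) volume 0 1 →
      |((∫ t in (0:ℝ)..1, f t) - Real.sqrt 2 / 8 * f 0
          - (1 - Real.sqrt 2 / 4) * f (1/2) - Real.sqrt 2 / 8 * f 1)
        - (4 - 3 * Real.sqrt 2) / 96 * (f' 1 - f' 0)|
        ≤ Real.sqrt (47/23040 - Real.sqrt 2 / 768) *
            Real.sqrt ((∫ t in (0:ℝ)..1, (f'' t)^2) - (f' 1 - f' 0)^2)) ∧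
    ∀ c : ℝ,
      (∀ f f' f'' : ℝ → ℝ,
        (∀ t ∈ Icc (0:ℝ) 1, f t = f 0 + ∫ s in (0:ℝ)..t, f' s) →
        (∀ t ∈ Icc (0:ℝ) 1, f' t = f' 0 + ∫ s in (0:ℝ)..t, f'' s) →
        IntervalIntegrable f'' volume 0 1 →
        IntervalIntegrable (fun t => (f'' t)^2) volume 0 1 →
        |((∫ t in (0:ℝ)..1, f t) - Real.sqrt 2 / 8 * f 0
            - (1 - Real.sqrt 2 / 4) * f (1/2) - Real.sqrt 2 / 8 * f 1)
          - (4 - 3 * Real.sqrt 2) / 96 * (f' 1 - f' 0)|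
          ≤ c * Real.sqrt ((∫ t in (0:ℝ)..1, (f'' t)^2) - (f' 1 - f' 0)^2)) →
      Real.sqrt (47/23040 - Real.sqrt 2 / 768) ≤ c := by
  have hK := continuous_peanoKernel.intervalIntegrable (μ := volume) 0 1
  have hK2 := (continuous_peanoKernel.pow 2).intervalIntegrable (μ := volume) 0 1
  constructor
  · intro f f' f'' hf hf' hf'' hf''2
    rw [quadrature_remainder_eq_integral_peanoKernel_mul hf hf' hf'',
      IsPrimitiveOn.sub_eq hf' zero_le_one, ← integral_peanoKernel,
      ← integral_peanoKernel_sq_sub_sq]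
    exact abs_intervalIntegral_mul_sub_le hK hK2 hf'' hf''2
  · intro c hc
    obtain ⟨F, F', hF, hF'⟩ : ∃ F F', IsPrimitiveOn F F' 0 1 ∧ IsPrimitiveOn F' peanoKernel 0 1 :=
      ⟨_, _, isPrimitiveOn_intervalIntegral _ 0 1, isPrimitiveOn_intervalIntegral _ 0 1⟩
    have h := hc F F' peanoKernel hF hF' hK hK2
    rw [quadrature_remainder_eq_integral_peanoKernel_mul hF hF' hK, hF'.sub_eq zero_le_one,
      ← integral_peanoKernel] at h
    simp only [← pow_two] at h
    have hpos : 0 < 47 / 23040 - √2 / 768 := sub_pos.2 sqrt_two_div_768_lt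
    rw [integral_peanoKernel_sq_sub_sq, abs_of_pos hpos] at h
    refine le_of_mul_le_mul_right ?_ (sqrt_pos.2 hpos)
    rwa [mul_self_sqrt hpos.le]
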